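/- Fix p, k ∈ ℕ, ν ∈ [0,1], μ ∈ [0,1], λ ≥ 0, ρ > 0, A > 0, X > 0. Let Ω(α) = (1−ν)‖α‖₁ + (ν/2)‖α‖₂² be the elastic-net penalty on ℝ^k, and let C = {D ∈ ℝ^{p×k} : (1−μ)‖d^{(j)}‖₁ + (μ/2)‖d^{(j)}‖₂² ≤ 1 for every column d^{(j)} of D}. Then there exists a constant C₀ > 0, depending only on k, ν, μ, λ, ρ, A and X, such that the following holds: for every x ∈ ℝ^p with ‖x‖₂ ≤ X, every pair of symmetric matrices G, G* ∈ ℝ^{k×k} with G ⪰ ρI and G* ⪰ ρI, and every β, β* ∈ ℝ^k, if α is a minimizer of α ↦ (1/2)αᵀGα − αᵀβ + λΩ(α) over ℝ^k and α* is a minimizer of α ↦ (1/2)αᵀG*α − αᵀβ* + λΩ(α) over ℝ^k, with ‖α‖₂ ≤ A and ‖α*‖₂ ≤ A, then sup_{D ∈ C} |g(D) − g*(D)| ≤ C₀·(‖G − G*‖_F + ‖β − β*‖₂), where g(D) = (1/2)αᵀDᵀDα − αᵀDᵀx + λΩ(α) and g*(D) = (1/2)α*ᵀDᵀDα* − α*ᵀDᵀx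 + λΩ(α*). -/

import Mathlib

/-- The elastic-net penalty `Ω(α) = (1−ν)‖α‖₁ + (ν/2)‖α‖₂²` on `ℝ^k`. -/
noncomputable def enetPen {k : ℕ} (ν : ℝ) (a : EuclideanSpace ℝ (Fin k)) : ℝ :=
  (1 - ν) * (∑ i, |a i|) + ν / 2 * (∑ i, (a i) ^ 2)

/-- The elastic-net column norm `(1−μ)‖d‖₁ + (μ/2)‖d‖₂²` on `ℝ^p`. -/
noncomputable def enetColNorm {p : ℕ} (μ : ℝ) (d : Fin p → ℝ) : ℝ :=
  (1 - μ) * (∑ i, |d i|) + μ / 2 * (∑ i, (d i) ^ 2)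

/-! Both codes minimise `ρ`-strongly convex objectives, and a midpoint argument turns minimality
into quadratic growth: `F(α) + ρ/4 ‖α − γ‖² ≤ F(γ)`. Adding the two growth inequalities bounds
`ρ/2 ‖α − α*‖²` by the variation between `α` and `α*` of `F − F*`, a quadratic form in
`(G − G*, β − β*)`; Cauchy–Schwarz gives `‖α − α*‖ ≤ (2/ρ) (A ‖G − G*‖_F + ‖β − β*‖)`.
Every column of a dictionary in `C` has `ℓ₂`-norm at most `2`, so `‖D‖_F² ≤ 4k` and the surrogate
is Lipschitz in the code on the ball of radius `A`, uniformly over `C`. -/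

open Finset
open scoped RealInnerProductSpace

lemma abs_norm_sq_sub_norm_sq_le {E : Type*} [SeminormedAddCommGroup E] (y z : E) :
    |‖y‖ ^ 2 - ‖z‖ ^ 2| ≤ ‖y - z‖ * (‖y‖ + ‖z‖) := by
  rw [sq_sub_sq, abs_mul, abs_of_nonneg (by positivity), mul_comm]
  gcongr
  exact abs_norm_sub_norm_le y z

section EuclideanSpace

variable {ι κ : Type*} [Fintype ι] [Fintype κ]

lemma EuclideanSpace.sum_mul_eq_inner (u v : EuclideanSpace ℝ ι) :
    ∑ i, u i * v i = ⟪u, v⟫ := by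
  simp [PiLp.inner_apply, mul_comm]

lemma EuclideanSpace.abs_sum_abs_sub_sum_abs_le (u v : EuclideanSpace ℝ ι) :
    |(∑ i, |u i|) - (∑ i, |v i|)| ≤ Fintype.card ι * ‖u - v‖ := by
  rw [← sum_sub_distrib]
  calc |∑ i, (|u i| - |v i|)| ≤ ∑ i, |(u - v) i| := by
        refine (abs_sum_le_sum_abs _ _).trans (sum_le_sum fun i _ => ?_)
        simpa using abs_abs_sub_abs_le_abs_sub (u i) (v i)
    _ ≤ ∑ _i : ι, ‖u - v‖ := sum_le_sum fun i _ => PiLp.norm_apply_le (u - v) i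
    _ = Fintype.card ι * ‖u - v‖ := by simp

variable [DecidableEq κ]

lemma Matrix.norm_toEuclideanLin_le (M : Matrix ι κ ℝ) (v : EuclideanSpace ℝ κ) :
    ‖M.toEuclideanLin v‖ ≤ √(∑ i, ∑ j, M i j ^ 2) * ‖v‖ := by
  have hsq : ‖M.toEuclideanLin v‖ ^ 2 ≤ (∑ i, ∑ j, M i j ^ 2) * ‖v‖ ^ 2 := by
    rw [EuclideanSpace.real_norm_sq_eq, EuclideanSpace.real_norm_sq_eq, sum_mul]
    exact sum_le_sum fun i _ => sum_mul_sq_le_sq_mul_sq _ _ _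
  rw [← Real.sqrt_sq (norm_nonneg (M.toEuclideanLin v)), ← Real.sqrt_sq (norm_nonneg v),
    ← Real.sqrt_mul (by positivity)]
  exact Real.sqrt_le_sqrt hsq

lemma Matrix.sum_sum_mul_mul_eq_inner (M : Matrix ι κ ℝ) (u : EuclideanSpace ℝ ι)
    (v : EuclideanSpace ℝ κ) :
    ∑ i, ∑ j, u i * M i j * v j = ⟪u, M.toEuclideanLin v⟫ := by
  rw [← EuclideanSpace.sum_mul_eq_inner]
  simp only [mul_assoc, ← mul_sum]
  rfl

lemma Matrix.abs_inner_toEuclideanLin_sub_le (M : Matrix κ κ ℝ) (u v : EuclideanSpace ℝ κ) :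
    |⟪u, M.toEuclideanLin u⟫ - ⟪v, M.toEuclideanLin v⟫|
      ≤ √(∑ i, ∑ j, M i j ^ 2) * (‖u‖ + ‖v‖) * ‖u - v‖ := by
  have hsplit : ⟪u, M.toEuclideanLin u⟫ - ⟪v, M.toEuclideanLin v⟫
      = ⟪u - v, M.toEuclideanLin u⟫ + ⟪v, M.toEuclideanLin (u - v)⟫ := by
    rw [map_sub, inner_sub_left, inner_sub_right]; ring
  have hM := M.norm_toEuclideanLin_le
  calc _ ≤ ‖u - v‖ * ‖M.toEuclideanLin u‖ + ‖v‖ * ‖M.toEuclideanLin (u - v)‖ := by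
        rw [hsplit]
        exact (abs_add_le _ _).trans
          (add_le_add (abs_real_inner_le_norm _ _) (abs_real_inner_le_norm _ _))
    _ ≤ ‖u - v‖ * (√(∑ i, ∑ j, M i j ^ 2) * ‖u‖)
          + ‖v‖ * (√(∑ i, ∑ j, M i j ^ 2) * ‖u - v‖) := by gcongr <;> apply hM
    _ = _ := by ring

end EuclideanSpace

section ElasticNet

variable {k : ℕ} {ν lam ρ : ℝ}

lemma enetPen_eq (a : EuclideanSpace ℝ (Fin k)) :
    enetPen ν a = (1 - ν) * ∑ i, |a i| + ν / 2 * ‖a‖ ^ 2 := by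
  rw [enetPen, EuclideanSpace.real_norm_sq_eq]

lemma enetPen_midpoint_le (hν0 : 0 ≤ ν) (hν1 : ν ≤ 1) (a b : EuclideanSpace ℝ (Fin k)) :
    enetPen ν ((1 / 2 : ℝ) • (a + b)) ≤ 1 / 2 * enetPen ν a + 1 / 2 * enetPen ν b := by
  have hl1 : ∑ i, |((1 / 2 : ℝ) • (a + b)) i| ≤ 1 / 2 * ∑ i, |a i| + 1 / 2 * ∑ i, |b i| := by
    simp only [mul_sum, ← sum_add_distrib]
    refine sum_le_sum fun i _ => ?_
    have hi : ((1 / 2 : ℝ) • (a + b)) i = 1 / 2 * (a i + b i) := rfl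
    rw [hi, abs_mul, abs_of_pos (by norm_num), ← mul_add]
    gcongr
    exact abs_add_le _ _
  have hl2 : ‖(1 / 2 : ℝ) • (a + b)‖ ^ 2 ≤ 1 / 2 * ‖a‖ ^ 2 + 1 / 2 * ‖b‖ ^ 2 := by
    rw [norm_smul, Real.norm_of_nonneg (by norm_num)]
    nlinarith [norm_add_le a b, norm_nonneg (a + b), sq_nonneg (‖a‖ - ‖b‖)]
  rw [enetPen_eq, enetPen_eq, enetPen_eq]
  nlinarith [mul_le_mul_of_nonneg_left hl1 (by linarith : 0 ≤ 1 - ν),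
    mul_le_mul_of_nonneg_left hl2 (by linarith : 0 ≤ ν / 2)]

lemma abs_enetPen_sub_le (hν0 : 0 ≤ ν) (hν1 : ν ≤ 1) (a b : EuclideanSpace ℝ (Fin k)) :
    |enetPen ν a - enetPen ν b| ≤ (k + (‖a‖ + ‖b‖) / 2) * ‖a - b‖ := by
  have hl1 := EuclideanSpace.abs_sum_abs_sub_sum_abs_le a b
  have hl2 := abs_norm_sq_sub_norm_sq_le a b
  rw [Fintype.card_fin] at hl1
  have hsplit : enetPen ν a - enetPen ν b
      = (1 - ν) * ((∑ i, |a i|) - ∑ i, |b i|) + ν / 2 * (‖a‖ ^ 2 - ‖b‖ ^ 2) := by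
    rw [enetPen_eq, enetPen_eq]; ring
  calc |enetPen ν a - enetPen ν b|
      ≤ (1 - ν) * |(∑ i, |a i|) - (∑ i, |b i|)| + ν / 2 * |‖a‖ ^ 2 - ‖b‖ ^ 2| := by
        rw [hsplit]
        refine (abs_add_le _ _).trans_eq ?_
        rw [abs_mul, abs_mul, abs_of_nonneg (sub_nonneg.2 hν1),
          abs_of_nonneg (by positivity : 0 ≤ ν / 2)]
    _ ≤ 1 * (k * ‖a - b‖) + 1 / 2 * (‖a - b‖ * (‖a‖ + ‖b‖)) := by
        gcongr
        linarith
    _ = (k + (‖a‖ + ‖b‖) / 2) * ‖a - b‖ := by ring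

noncomputable def enetObjective (lam ν : ℝ) (G : Matrix (Fin k) (Fin k) ℝ)
    (β c : EuclideanSpace ℝ (Fin k)) : ℝ :=
  (1 / 2) * (∑ i, ∑ j, c i * G i j * c j) - (∑ i, c i * β i) + lam * enetPen ν c

lemma enetObjective_eq (G : Matrix (Fin k) (Fin k) ℝ) (β c : EuclideanSpace ℝ (Fin k)) :
    enetObjective lam ν G β c
      = 1 / 2 * ⟪c, G.toEuclideanLin c⟫ - ⟪c, β⟫ + lam * enetPen ν c := by
  rw [enetObjective, Matrix.sum_sum_mul_mul_eq_inner, EuclideanSpace.sum_mul_eq_inner]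

lemma enetObjective_midpoint_le (hν0 : 0 ≤ ν) (hν1 : ν ≤ 1) (hlam : 0 ≤ lam)
    (G : Matrix (Fin k) (Fin k) ℝ) (β a b : EuclideanSpace ℝ (Fin k)) :
    enetObjective lam ν G β ((1 / 2 : ℝ) • (a + b))
      ≤ 1 / 2 * enetObjective lam ν G β a + 1 / 2 * enetObjective lam ν G β b
        - 1 / 8 * ⟪a - b, G.toEuclideanLin (a - b)⟫ := by
  have hpen := mul_le_mul_of_nonneg_left (enetPen_midpoint_le hν0 hν1 a b) hlam
  simp only [enetObjective_eq, map_add, map_sub, map_smul, inner_add_left, inner_add_right,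
    inner_sub_left, inner_sub_right, real_inner_smul_left, real_inner_smul_right] at hpen ⊢
  linarith

lemma enetObjective_add_le_of_forall_le (hν0 : 0 ≤ ν) (hν1 : ν ≤ 1) (hlam : 0 ≤ lam)
    {G : Matrix (Fin k) (Fin k) ℝ}
    (hG : ∀ v : EuclideanSpace ℝ (Fin k), ρ * ‖v‖ ^ 2 ≤ ∑ i, ∑ j, v i * G i j * v j)
    {β a : EuclideanSpace ℝ (Fin k)}
    (hmin : ∀ c, enetObjective lam ν G β a ≤ enetObjective lam ν G β c)
    (b : EuclideanSpace ℝ (Fin k)) :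
    enetObjective lam ν G β a + ρ / 4 * ‖a - b‖ ^ 2 ≤ enetObjective lam ν G β b := by
  have hmid := enetObjective_midpoint_le hν0 hν1 hlam G β a b
  have hρ := hG (a - b)
  rw [Matrix.sum_sum_mul_mul_eq_inner] at hρ
  linarith [hmin ((1 / 2 : ℝ) • (a + b))]

lemma enetObjective_sub_enetObjective (G G' : Matrix (Fin k) (Fin k) ℝ)
    (β β' c : EuclideanSpace ℝ (Fin k)) :
    enetObjective lam ν G β c - enetObjective lam ν G' β' c
      = 1 / 2 * ⟪c, (G - G').toEuclideanLin c⟫ - ⟪c, β - β'⟫ := by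
  rw [enetObjective_eq, enetObjective_eq, map_sub, LinearMap.sub_apply, inner_sub_right,
    inner_sub_right]
  ring

theorem norm_sub_le_of_forall_le (hν0 : 0 ≤ ν) (hν1 : ν ≤ 1) (hlam : 0 ≤ lam) (hρ : 0 < ρ)
    {G G' : Matrix (Fin k) (Fin k) ℝ}
    (hG : ∀ v : EuclideanSpace ℝ (Fin k), ρ * ‖v‖ ^ 2 ≤ ∑ i, ∑ j, v i * G i j * v j)
    (hG' : ∀ v : EuclideanSpace ℝ (Fin k), ρ * ‖v‖ ^ 2 ≤ ∑ i, ∑ j, v i * G' i j * v j)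
    {β β' a a' : EuclideanSpace ℝ (Fin k)}
    (hmin : ∀ c, enetObjective lam ν G β a ≤ enetObjective lam ν G β c)
    (hmin' : ∀ c, enetObjective lam ν G' β' a' ≤ enetObjective lam ν G' β' c) :
    ‖a - a'‖ ≤ 2 / ρ * ((‖a‖ + ‖a'‖) / 2 * √(∑ i, ∑ j, (G i j - G' i j) ^ 2) + ‖β - β'‖) := by
  set K := (‖a‖ + ‖a'‖) / 2 * √(∑ i, ∑ j, (G i j - G' i j) ^ 2) + ‖β - β'‖ with hK
  have hgap := enetObjective_add_le_of_forall_le hν0 hν1 hlam hG hmin a'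
  have hgap' := enetObjective_add_le_of_forall_le hν0 hν1 hlam hG' hmin' a
  have hdiff : (enetObjective lam ν G β a' - enetObjective lam ν G' β' a')
      - (enetObjective lam ν G β a - enetObjective lam ν G' β' a) ≤ ‖a - a'‖ * K := by
    rw [enetObjective_sub_enetObjective, enetObjective_sub_enetObjective]
    have hM := (G - G').abs_inner_toEuclideanLin_sub_le a' a
    have hβ := abs_real_inner_le_norm (a' - a) (β - β')
    rw [inner_sub_left] at hβ
    rw [norm_sub_rev a'] at hM hβ
    simp only [Matrix.sub_apply] at hM
    rw [hK]
    linarith [(abs_le.1 hM).2, (abs_le.1 hβ).1]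
  rw [norm_sub_rev a'] at hgap'
  rcases (norm_nonneg (a - a')).eq_or_lt with h0 | hpos
  · rw [← h0]; positivity
  · rw [div_mul_eq_mul_div, le_div_iff₀ hρ]
    exact le_of_mul_le_mul_right (by nlinarith) hpos

noncomputable def enetSurrogate {p : ℕ} (lam ν : ℝ) (x : EuclideanSpace ℝ (Fin p))
    (D : Matrix (Fin p) (Fin k) ℝ) (a : EuclideanSpace ℝ (Fin k)) : ℝ :=
  (1 / 2) * (∑ i, (∑ j, D i j * a j) ^ 2) - (∑ i, (∑ j, D i j * a j) * x i) + lam * enetPen ν a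

lemma enetSurrogate_eq {p : ℕ} (x : EuclideanSpace ℝ (Fin p)) (D : Matrix (Fin p) (Fin k) ℝ)
    (a : EuclideanSpace ℝ (Fin k)) :
    enetSurrogate lam ν x D a
      = 1 / 2 * ‖D.toEuclideanLin a‖ ^ 2 - ⟪D.toEuclideanLin a, x⟫ + lam * enetPen ν a := by
  rw [EuclideanSpace.real_norm_sq_eq, ← EuclideanSpace.sum_mul_eq_inner]
  rfl

lemma abs_enetSurrogate_sub_le (hν0 : 0 ≤ ν) (hν1 : ν ≤ 1) (hlam : 0 ≤ lam) {p : ℕ}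
    (x : EuclideanSpace ℝ (Fin p)) (D : Matrix (Fin p) (Fin k) ℝ)
    (a b : EuclideanSpace ℝ (Fin k)) :
    |enetSurrogate lam ν x D a - enetSurrogate lam ν x D b|
      ≤ ((∑ i, ∑ j, D i j ^ 2) * ((‖a‖ + ‖b‖) / 2) + √(∑ i, ∑ j, D i j ^ 2) * ‖x‖
          + lam * (k + (‖a‖ + ‖b‖) / 2)) * ‖a - b‖ := by
  set F := √(∑ i, ∑ j, D i j ^ 2)
  have hF2 : ∑ i, ∑ j, D i j ^ 2 = F ^ 2 := (Real.sq_sqrt (by positivity)).symm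
  have hD := D.norm_toEuclideanLin_le
  have hsub : D.toEuclideanLin a - D.toEuclideanLin b = D.toEuclideanLin (a - b) :=
    (map_sub _ a b).symm
  have hquad : |‖D.toEuclideanLin a‖ ^ 2 - ‖D.toEuclideanLin b‖ ^ 2|
      ≤ F * ‖a - b‖ * (F * ‖a‖ + F * ‖b‖) := by
    refine (abs_norm_sq_sub_norm_sq_le _ _).trans ?_
    rw [hsub]
    gcongr <;> apply hD
  have hlin : |⟪D.toEuclideanLin a, x⟫ - ⟪D.toEuclideanLin b, x⟫| ≤ F * ‖a - b‖ * ‖x‖ := by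
    rw [← inner_sub_left, hsub]
    exact (abs_real_inner_le_norm _ _).trans (by gcongr; apply hD)
  have hpen : |lam * enetPen ν a - lam * enetPen ν b|
      ≤ lam * ((k + (‖a‖ + ‖b‖) / 2) * ‖a - b‖) := by
    rw [← mul_sub, abs_mul, abs_of_nonneg hlam]
    exact mul_le_mul_of_nonneg_left (abs_enetPen_sub_le hν0 hν1 a b) hlam
  rw [enetSurrogate_eq, enetSurrogate_eq, hF2, abs_le]
  rw [abs_le] at hquad hlin hpen
  constructor <;> linarith

end ElasticNet

lemma sum_sq_le_four_of_enetColNorm_le_one {p : ℕ} {μ : ℝ} (hμ0 : 0 ≤ μ) (hμ1 : μ ≤ 1)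
    {d : Fin p → ℝ} (hd : enetColNorm μ d ≤ 1) : ∑ i, d i ^ 2 ≤ 4 := by
  have hl1 : 0 ≤ ∑ i, |d i| := sum_nonneg fun _ _ => abs_nonneg _
  have hl2 : 0 ≤ ∑ i, d i ^ 2 := sum_nonneg fun _ _ => sq_nonneg _
  rw [enetColNorm] at hd
  rcases le_total μ (1 / 2) with hμ | hμ
  · have hle : ∑ i, d i ^ 2 ≤ (∑ i, |d i|) ^ 2 := by
      simpa only [sq_abs] using
        sum_sq_le_sq_sum_of_nonneg (s := univ) (fun i _ => abs_nonneg (d i))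
    have hl1_le : ∑ i, |d i| ≤ 2 := by nlinarith [mul_nonneg hμ0 hl2]
    nlinarith
  · nlinarith

lemma sum_sum_sq_le_of_enetColNorm_le_one {p k : ℕ} {μ : ℝ} (hμ0 : 0 ≤ μ) (hμ1 : μ ≤ 1)
    {D : Matrix (Fin p) (Fin k) ℝ} (hD : ∀ j, enetColNorm μ (fun i => D i j) ≤ 1) :
    ∑ i, ∑ j, D i j ^ 2 ≤ 4 * k := by
  rw [sum_comm]
  calc ∑ j, ∑ i, D i j ^ 2 ≤ ∑ _j : Fin k, (4 : ℝ) :=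
        sum_le_sum fun j _ => sum_sq_le_four_of_enetColNorm_le_one hμ0 hμ1 (hD j)
    _ = 4 * k := by simp [mul_comm]

theorem surrogate_supnorm_error_bound_general
    (k : ℕ) (ν μ lam ρ A X : ℝ)
    (hν0 : 0 ≤ ν) (hν1 : ν ≤ 1) (hμ0 : 0 ≤ μ) (hμ1 : μ ≤ 1)
    (hlam : 0 ≤ lam) (hρ : 0 < ρ) :
    ∃ C₀ > 0, ∀ (p : ℕ) (x : EuclideanSpace ℝ (Fin p)), ‖x‖ ≤ X →
      ∀ (G Gstar : Matrix (Fin k) (Fin k) ℝ), G.IsSymm → Gstar.IsSymm →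
      (∀ a : EuclideanSpace ℝ (Fin k), ρ * ‖a‖ ^ 2 ≤ ∑ i, ∑ j, a i * G i j * a j) →
      (∀ a : EuclideanSpace ℝ (Fin k), ρ * ‖a‖ ^ 2 ≤ ∑ i, ∑ j, a i * Gstar i j * a j) →
      ∀ (β βstar : EuclideanSpace ℝ (Fin k)) (a astar : EuclideanSpace ℝ (Fin k)),
      (∀ b : EuclideanSpace ℝ (Fin k),
        (1 / 2) * (∑ i, ∑ j, a i * G i j * a j) - (∑ i, a i * β i) + lam * enetPen ν a ≤
        (1 / 2) * (∑ i, ∑ j, b i * G i j * b j) - (∑ i, b i * β i) + lam * enetPen ν b) →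
      (∀ b : EuclideanSpace ℝ (Fin k),
        (1 / 2) * (∑ i, ∑ j, astar i * Gstar i j * astar j) - (∑ i, astar i * βstar i)
            + lam * enetPen ν astar ≤
        (1 / 2) * (∑ i, ∑ j, b i * Gstar i j * b j) - (∑ i, b i * βstar i)
            + lam * enetPen ν b) →
      ‖a‖ ≤ A → ‖astar‖ ≤ A →
      ∀ D : Matrix (Fin p) (Fin k) ℝ, (∀ j, enetColNorm μ (fun i => D i j) ≤ 1) →
        |((1 / 2) * (∑ i, (∑ j, D i j * a j) ^ 2) - (∑ i, (∑ j, D i j * a j) * x i)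
            + lam * enetPen ν a) -
          ((1 / 2) * (∑ i, (∑ j, D i j * astar j) ^ 2) - (∑ i, (∑ j, D i j * astar j) * x i)
            + lam * enetPen ν astar)| ≤
          C₀ * (Real.sqrt (∑ i, ∑ j, (G i j - Gstar i j) ^ 2) + ‖β - βstar‖) := by
  set L := 4 * k * A + √(4 * k) * X + lam * (k + A) with hL_def
  refine ⟨max (L * (2 / ρ * (A + 1))) 1, lt_max_of_lt_right one_pos, ?_⟩
  intro p x hx G Gstar _ _ hG hGstar β βstar a astar hmin hminstar ha hastar D hD
  have hA : 0 ≤ A := (norm_nonneg a).trans ha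
  have hX : 0 ≤ X := (norm_nonneg x).trans hx
  have hL : 0 ≤ L := by positivity
  have hFrob := sum_sum_sq_le_of_enetColNorm_le_one hμ0 hμ1 hD
  have hLip : (∑ i, ∑ j, D i j ^ 2) * ((‖a‖ + ‖astar‖) / 2) + √(∑ i, ∑ j, D i j ^ 2) * ‖x‖
      + lam * (k + (‖a‖ + ‖astar‖) / 2) ≤ L := by
    rw [hL_def]
    gcongr <;> linarith
  have hstab := norm_sub_le_of_forall_le hν0 hν1 hlam hρ hG hGstar hmin hminstar
  have hcoef : (‖a‖ + ‖astar‖) / 2 * √(∑ i, ∑ j, (G i j - Gstar i j) ^ 2) + ‖β - βstar‖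
      ≤ (A + 1) * (√(∑ i, ∑ j, (G i j - Gstar i j) ^ 2) + ‖β - βstar‖) := by
    nlinarith [Real.sqrt_nonneg (∑ i, ∑ j, (G i j - Gstar i j) ^ 2), norm_nonneg (β - βstar)]
  calc _ ≤ L * ‖a - astar‖ :=
        (abs_enetSurrogate_sub_le hν0 hν1 hlam x D a astar).trans (by gcongr)
    _ ≤ L * (2 / ρ * ((A + 1) * (√(∑ i, ∑ j, (G i j - Gstar i j) ^ 2) + ‖β - βstar‖))) := by
        gcongr
        exact hstab.trans (by gcongr)
    _ ≤ _ := by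
        rw [← mul_assoc, ← mul_assoc, mul_assoc L]
        gcongr
        exact le_max_left _ _

/-- The sup-norm distance over the elastic-net constraint set `C` between the surrogates
built from an approximate code and from the exact code is controlled by the parameter errors
`‖G − G*‖_F + ‖β − β*‖₂`, with a constant depending only on `k, ν, μ, λ, ρ, A, X`. -/
theorem surrogate_supnorm_error_bound
    (k : ℕ) (ν μ lam ρ A X : ℝ)
    (hν0 : 0 ≤ ν) (hν1 : ν ≤ 1) (hμ0 : 0 ≤ μ) (hμ1 : μ ≤ 1)
    (hlam : 0 ≤ lam) (hρ : 0 < ρ) (hA : 0 < A) (hX : 0 < X) :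
    ∃ C₀ > 0, ∀ (p : ℕ) (x : EuclideanSpace ℝ (Fin p)), ‖x‖ ≤ X →
      ∀ (G Gstar : Matrix (Fin k) (Fin k) ℝ), G.IsSymm → Gstar.IsSymm →
      (∀ a : EuclideanSpace ℝ (Fin k), ρ * ‖a‖ ^ 2 ≤ ∑ i, ∑ j, a i * G i j * a j) →
      (∀ a : EuclideanSpace ℝ (Fin k), ρ * ‖a‖ ^ 2 ≤ ∑ i, ∑ j, a i * Gstar i j * a j) →
      ∀ (β βstar : EuclideanSpace ℝ (Fin k)) (a astar : EuclideanSpace ℝ (Fin k)),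
      (∀ b : EuclideanSpace ℝ (Fin k),
        (1 / 2) * (∑ i, ∑ j, a i * G i j * a j) - (∑ i, a i * β i) + lam * enetPen ν a ≤
        (1 / 2) * (∑ i, ∑ j, b i * G i j * b j) - (∑ i, b i * β i) + lam * enetPen ν b) →
      (∀ b : EuclideanSpace ℝ (Fin k),
        (1 / 2) * (∑ i, ∑ j, astar i * Gstar i j * astar j) - (∑ i, astar i * βstar i)
            + lam * enetPen ν astar ≤
        (1 / 2) * (∑ i, ∑ j, b i * Gstar i j * b j) - (∑ i, b i * βstar i)
            + lam * enetPen ν b) →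
      ‖a‖ ≤ A → ‖astar‖ ≤ A →
      ∀ D : Matrix (Fin p) (Fin k) ℝ, (∀ j, enetColNorm μ (fun i => D i j) ≤ 1) →
        |((1 / 2) * (∑ i, (∑ j, D i j * a j) ^ 2) - (∑ i, (∑ j, D i j * a j) * x i)
            + lam * enetPen ν a) -
          ((1 / 2) * (∑ i, (∑ j, D i j * astar j) ^ 2) - (∑ i, (∑ j, D i j * astar j) * x i)
            + lam * enetPen ν astar)| ≤
          C₀ * (Real.sqrt (∑ i, ∑ j, (G i j - Gstar i j) ^ 2) + ‖β - βstar‖) :=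
  surrogate_supnorm_error_bound_general k ν μ lam ρ A X hν0 hν1 hμ0 hμ1 hlam hρ
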